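/- Stereographic projection maps round circles on S^n to round circles or lines in ℝ^n: if C ⊂ S^n is the intersection of S^n with a 2-dimensional affine subspace of ℝ^{n+1} not passing through the projection point p, then its image under stereographic projection from p is a circle (intersection of a 2-dimensional affine subspace with a sphere) in ℝ^n ≅ T_p S^n. -/

import Mathlib

open scoped RealInnerProductSpace

/-- Stereographic projection from `p ∈ S^n` onto the hyperplane through the origin
orthogonal to `p`: `q ↦ (q - ⟪q,p⟫•p)/(1 - ⟪q,p⟫)`. -/
noncomputable def stereoProj {n : ℕ} (p q : EuclideanSpace ℝ (Fin (n + 1))) :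
    EuclideanSpace ℝ (Fin (n + 1)) :=
  (1 - ⟪q, p⟫)⁻¹ • (q - ⟪q, p⟫ • p)

/-!
The plane `A` is cut out of the affine 3-space `P` spanned by `A` and `p` by a hyperplane
`⟪a, ·⟫ = b` that misses `p`. The inverse of stereographic projection,
`y ↦ (‖y‖² + 1)⁻¹ • (2 • y + (‖y‖² - 1) • p)`, moves each point along its line through `p`, so it
preserves `P`, and it pulls the hyperplane back to the quadric
`(⟪a, p⟫ - b) ‖y‖² + 2 ⟪a, y⟫ = ⟪a, p⟫ + b`, which is a sphere. So the image of `S^n ∩ A` is the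
plane `P ∩ p^⊥` cut by a sphere, whose radius is positive because the image has two points.
-/

theorem AffineSubspace.finrank_direction_affineSpan_insert {k V P : Type*} [DivisionRing k]
    [AddCommGroup V] [Module k V] [AddTorsor V P] [FiniteDimensional k V]
    {s : AffineSubspace k P} {p₁ p₂ : P} (hp₁ : p₁ ∈ s) (hp₂ : p₂ ∉ s) :
    Module.finrank k (affineSpan k (insert p₂ (s : Set P))).direction =
      Module.finrank k s.direction + 1 := by
  have hv : p₂ -ᵥ p₁ ∉ s.direction := fun h =>
    hp₂ (by simpa using AffineSubspace.vadd_mem_of_mem_direction h hp₁)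
  rw [direction_affineSpan_insert hp₁, sup_comm, Submodule.finrank_sup_span_singleton hv]

theorem exists_pos_setOf_norm_sub_sq_eq_eq_sphere {F : Type*} [NormedAddCommGroup F]
    {c y₁ y₂ : F} {ρ : ℝ} (h₁ : ‖y₁ - c‖ ^ 2 = ρ) (h₂ : ‖y₂ - c‖ ^ 2 = ρ) (hne : y₁ ≠ y₂) :
    ∃ r > 0, {y | ‖y - c‖ ^ 2 = ρ} = Metric.sphere c r := by
  refine ⟨‖y₁ - c‖, norm_pos_iff.2 fun h => hne ?_, ?_⟩
  · have h₂' : ‖y₂ - c‖ ^ 2 = 0 := by rw [h₂, ← h₁, h, norm_zero, sq, zero_mul]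
    rw [sub_eq_zero.1 h, sub_eq_zero.1 (norm_eq_zero.1 (pow_eq_zero_iff two_ne_zero |>.1 h₂'))]
  · ext y
    rw [Set.mem_ofPred_eq, mem_sphere_iff_norm, ← h₁, sq_eq_sq₀ (norm_nonneg _) (norm_nonneg _)]

section InnerProductSpace

variable {F : Type*} [NormedAddCommGroup F] [InnerProductSpace ℝ F]

theorem Submodule.finrank_inf_orthogonal_span_singleton_add_one {U : Submodule ℝ F}
    [FiniteDimensional ℝ U] {p u : F} (hu : u ∈ U) (hpu : ⟪p, u⟫ ≠ 0) :
    Module.finrank ℝ ↥(U ⊓ (ℝ ∙ p)ᗮ) + 1 = Module.finrank ℝ U := by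
  set D := U ⊓ (ℝ ∙ p)ᗮ
  have hDU : D ≤ U := inf_le_left
  have huD : u ∉ D := fun h => hpu (Submodule.mem_orthogonal_singleton_iff_inner_right.1 h.2)
  have hsup : D ⊔ ℝ ∙ u = U := by
    refine le_antisymm (sup_le hDU ((Submodule.span_singleton_le_iff_mem _ _).2 hu)) ?_
    intro w hw
    have hwD : w - (⟪p, w⟫ / ⟪p, u⟫) • u ∈ D := by
      refine ⟨U.sub_mem hw (U.smul_mem _ hu),
        Submodule.mem_orthogonal_singleton_iff_inner_right.2 ?_⟩
      rw [inner_sub_right, real_inner_smul_right, div_mul_cancel₀ _ hpu, sub_self]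
    simpa using Submodule.add_mem_sup hwD (Submodule.smul_mem _ (⟪p, w⟫ / ⟪p, u⟫)
      (Submodule.mem_span_singleton_self u))
  have : FiniteDimensional ℝ D := Submodule.finiteDimensional_of_le hDU
  have hinf : D ⊓ ℝ ∙ u = ⊥ := (Submodule.disjoint_span_singleton_of_notMem huD).eq_bot
  have h := Submodule.finrank_sup_add_finrank_inf_eq D (ℝ ∙ u)
  rw [hsup, hinf, finrank_bot, finrank_span_singleton (by rintro rfl; exact huD D.zero_mem)] at h
  omega

theorem AffineSubspace.exists_eq_affineSpan_insert_inter_hyperplane (A : AffineSubspace ℝ F)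
    [A.direction.HasOrthogonalProjection] {x₀ p : F} (hx₀ : x₀ ∈ A) (hp : p ∉ A) :
    ∃ (a : F) (b : ℝ), ⟪a, p⟫ ≠ b ∧
      (A : Set F) = (affineSpan ℝ (insert p (A : Set F)) : Set F) ∩ {q | ⟪a, q⟫ = b} := by
  set V := A.direction
  set a := p - x₀ - V.starProjection (p - x₀)
  have ha : ∀ v ∈ V, ⟪a, v⟫ = 0 := fun v hv =>
    Submodule.inner_left_of_mem_orthogonal hv (V.sub_starProjection_mem_orthogonal _)
  have hpx₀ : ⟪a, p - x₀⟫ = ‖a‖ ^ 2 := by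
    rw [← real_inner_self_eq_norm_sq, ← sub_add_cancel (p - x₀) (V.starProjection (p - x₀)),
      inner_add_right, ha _ (V.starProjection_apply_mem _), add_zero]
  have ha₀ : a ≠ 0 := by
    intro h
    have hV : p -ᵥ x₀ ∈ V := by
      rw [vsub_eq_sub, sub_eq_zero.1 h]
      exact V.starProjection_apply_mem _
    exact hp (by simpa using AffineSubspace.vadd_mem_of_mem_direction hV hx₀)
  refine ⟨a, ⟪a, x₀⟫, ?_, ?_⟩
  · rw [← sub_ne_zero, ← inner_sub_right, hpx₀]
    positivity
  ext q
  constructor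
  · intro hq
    refine ⟨subset_affineSpan ℝ _ (Set.mem_insert_of_mem _ hq), ?_⟩
    rw [Set.mem_ofPred_eq, ← sub_eq_zero, ← inner_sub_right]
    exact ha _ (AffineSubspace.vsub_mem_direction hq hx₀)
  · rintro ⟨hqP, hq⟩
    obtain ⟨r, q₀, hq₀, rfl⟩ := (AffineSubspace.mem_affineSpan_insert_iff hx₀ p q).1 hqP
    have hq₀x₀ : ⟪a, q₀ - x₀⟫ = 0 := ha _ (AffineSubspace.vsub_mem_direction hq₀ hx₀)
    have hr : r * ‖a‖ ^ 2 = 0 := by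
      rw [Set.mem_ofPred_eq, vsub_eq_sub, vadd_eq_add, inner_add_right, real_inner_smul_right,
        hpx₀] at hq
      rw [inner_sub_right] at hq₀x₀
      linarith
    simpa [(mul_eq_zero.1 hr).resolve_right (by positivity)] using hq₀

theorem AffineSubspace.finrank_direction_affineSpan_insert_inf_orthogonal [FiniteDimensional ℝ F]
    {A : AffineSubspace ℝ F} {x₀ p y : F} (hx₀ : x₀ ∈ A) (hp : p ∉ A) (hpx₀ : ⟪p, p - x₀⟫ ≠ 0)
    (hy : y ∈ affineSpan ℝ (insert p (A : Set F)) ⊓ (ℝ ∙ p)ᗮ.toAffineSubspace) :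
    Module.finrank ℝ (affineSpan ℝ (insert p (A : Set F)) ⊓ (ℝ ∙ p)ᗮ.toAffineSubspace).direction =
      Module.finrank ℝ A.direction := by
  have hdim := finrank_direction_affineSpan_insert hx₀ hp
  rw [direction_inf_of_mem_inf hy, Submodule.toAffineSubspace_direction]
  have := Submodule.finrank_inf_orthogonal_span_singleton_add_one
    (vsub_mem_direction (mem_affineSpan ℝ (Set.mem_insert p _))
      (mem_affineSpan ℝ (Set.mem_insert_of_mem p hx₀))) hpx₀
  omega

theorem one_sub_inner_ne_zero_of_ne {p q : F} (hp : ‖p‖ = 1) (hq : ‖q‖ = 1) (hqp : q ≠ p) :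
    1 - ⟪q, p⟫ ≠ 0 :=
  sub_ne_zero.2 fun h => hqp ((inner_eq_one_iff_of_norm_eq_one hq hp).1 h.symm)

noncomputable def stereoInv (p y : F) : F :=
  (‖y‖ ^ 2 + 1)⁻¹ • ((2 : ℝ) • y + (‖y‖ ^ 2 - 1) • p)

theorem stereoInv_sub_self (p y : F) : stereoInv p y - p = (2 / (‖y‖ ^ 2 + 1)) • (y - p) := by
  have : ‖y‖ ^ 2 + 1 ≠ 0 := by positivity
  rw [stereoInv]
  match_scalars <;> field_simp
  ring

theorem stereoInv_mem_iff {P : AffineSubspace ℝ F} {p : F} (hp : p ∈ P) (y : F) :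
    stereoInv p y ∈ P ↔ y ∈ P := by
  rw [← AffineSubspace.vsub_right_mem_direction_iff_mem hp, vsub_eq_sub, stereoInv_sub_self,
    Submodule.smul_mem_iff _ (by positivity), ← vsub_eq_sub,
    AffineSubspace.vsub_right_mem_direction_iff_mem hp]

theorem norm_stereoInv {p y : F} (hp : ‖p‖ = 1) (hy : y ∈ (ℝ ∙ p)ᗮ) : ‖stereoInv p y‖ = 1 := by
  have : ‖y‖ ^ 2 + 1 ≠ 0 := by positivity
  rw [← pow_eq_one_iff_of_nonneg (norm_nonneg _) two_ne_zero, stereoInv, norm_smul, mul_pow,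
    norm_add_sq_real, norm_smul, norm_smul, real_inner_smul_left, real_inner_smul_right,
    Submodule.mem_orthogonal_singleton_iff_inner_left.1 hy, hp]
  simp only [norm_inv, Real.norm_eq_abs, inv_pow, sq_abs, mul_zero, add_zero, mul_one]
  field_simp
  ring

theorem inner_stereoInv_eq_iff (a p y : F) {b : ℝ} (hab : ⟪a, p⟫ ≠ b) :
    ⟪a, stereoInv p y⟫ = b ↔
      ‖y + (⟪a, p⟫ - b)⁻¹ • a‖ ^ 2 =
        ((⟪a, p⟫ + b) * (⟪a, p⟫ - b) + ‖a‖ ^ 2) / (⟪a, p⟫ - b) ^ 2 := by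
  have hk : ⟪a, p⟫ - b ≠ 0 := sub_ne_zero.2 hab
  have : ‖y‖ ^ 2 + 1 ≠ 0 := by positivity
  rw [stereoInv, real_inner_smul_right, inner_add_right, real_inner_smul_right,
    real_inner_smul_right, norm_add_sq_real, norm_smul, real_inner_smul_right, real_inner_comm y a,
    Real.norm_eq_abs, mul_pow, sq_abs, inv_mul_eq_iff_eq_mul₀ this]
  field_simp
  constructor <;> intro h
  · linear_combination (⟪a, p⟫ - b) * h
  · linear_combination mul_left_cancel₀ hk (add_right_cancel h)

end InnerProductSpace

section Stereographic

variable {n : ℕ} {p : EuclideanSpace ℝ (Fin (n + 1))}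

theorem stereoProj_mem_orthogonal (hp : ‖p‖ = 1) (q : EuclideanSpace ℝ (Fin (n + 1))) :
    stereoProj p q ∈ (ℝ ∙ p)ᗮ := by
  rw [Submodule.mem_orthogonal_singleton_iff_inner_left, stereoProj, real_inner_smul_left,
    inner_sub_left, real_inner_smul_left, real_inner_self_eq_norm_sq, hp]
  ring

theorem stereoInv_stereoProj (hp : ‖p‖ = 1) {q : EuclideanSpace ℝ (Fin (n + 1))} (hq : ‖q‖ = 1)
    (hqp : q ≠ p) : stereoInv p (stereoProj p q) = q := by
  have ht := one_sub_inner_ne_zero_of_ne hp hq hqp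
  have hN : ‖stereoProj p q‖ ^ 2 = (1 + ⟪q, p⟫) / (1 - ⟪q, p⟫) := by
    rw [stereoProj, norm_smul, mul_pow, norm_sub_sq_real, norm_smul, real_inner_smul_right, hq, hp,
      Real.norm_eq_abs, Real.norm_eq_abs, mul_pow, sq_abs, sq_abs, inv_pow]
    field_simp
    ring
  rw [stereoInv, hN, stereoProj]
  match_scalars <;> field_simp <;> ring

theorem stereoProj_stereoInv (hp : ‖p‖ = 1) {y : EuclideanSpace ℝ (Fin (n + 1))}
    (hy : y ∈ (ℝ ∙ p)ᗮ) : stereoProj p (stereoInv p y) = y := by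
  have : ‖y‖ ^ 2 + 1 ≠ 0 := by positivity
  have hyp : ⟪stereoInv p y, p⟫ = (‖y‖ ^ 2 - 1) / (‖y‖ ^ 2 + 1) := by
    rw [stereoInv, real_inner_smul_left, inner_add_left, real_inner_smul_left, real_inner_smul_left,
      Submodule.mem_orthogonal_singleton_iff_inner_left.1 hy, real_inner_self_eq_norm_sq, hp]
    field_simp
    ring
  rw [stereoProj, hyp, stereoInv]
  match_scalars <;> field_simp <;> ring

theorem stereoProj_injOn (hp : ‖p‖ = 1) : Set.InjOn (stereoProj p) (Metric.sphere 0 1 \ {p}) :=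
  Set.LeftInvOn.injOn fun _ hq => stereoInv_stereoProj hp (mem_sphere_zero_iff_norm.1 hq.1) hq.2

theorem image_stereoProj_sphere_inter (hp : ‖p‖ = 1) {X : Set (EuclideanSpace ℝ (Fin (n + 1)))}
    (hpX : p ∉ X) :
    stereoProj p '' (Metric.sphere 0 1 ∩ X) = {y | y ∈ (ℝ ∙ p)ᗮ ∧ stereoInv p y ∈ X} := by
  ext y
  constructor
  · rintro ⟨q, ⟨hq, hqX⟩, rfl⟩
    rw [mem_sphere_zero_iff_norm] at hq
    refine ⟨stereoProj_mem_orthogonal hp q, ?_⟩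
    rwa [stereoInv_stereoProj hp hq (ne_of_mem_of_not_mem hqX hpX)]
  · rintro ⟨hy, hyX⟩
    exact ⟨stereoInv p y, ⟨mem_sphere_zero_iff_norm.2 (norm_stereoInv hp hy), hyX⟩,
      stereoProj_stereoInv hp hy⟩

end Stereographic

/-- Stereographic projection maps round circles to round circles: if `C` is the
intersection of the unit sphere with a 2-dimensional affine subspace not containing the
projection point `p`, and `C` has more than one point, then the image of `C` under
stereographic projection from `p` is a round circle: the intersection of a
2-dimensional affine subspace with a sphere of positive radius. -/
theorem stereoProj_round_circle {n : ℕ} (p : EuclideanSpace ℝ (Fin (n + 1)))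
    (hp : ‖p‖ = 1) (A : AffineSubspace ℝ (EuclideanSpace ℝ (Fin (n + 1))))
    (hA : Module.finrank ℝ A.direction = 2) (hpA : p ∉ A)
    (htwo : ∃ x ∈ Metric.sphere (0 : EuclideanSpace ℝ (Fin (n + 1))) 1 ∩ (A : Set _),
        ∃ y ∈ Metric.sphere (0 : EuclideanSpace ℝ (Fin (n + 1))) 1 ∩ (A : Set _), x ≠ y) :
    ∃ (c : EuclideanSpace ℝ (Fin (n + 1))) (r : ℝ)
      (A' : AffineSubspace ℝ (EuclideanSpace ℝ (Fin (n + 1)))),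
      0 < r ∧ Module.finrank ℝ A'.direction = 2 ∧
      stereoProj p '' (Metric.sphere (0 : EuclideanSpace ℝ (Fin (n + 1))) 1 ∩ (A : Set _)) =
        (A' : Set _) ∩ Metric.sphere c r := by
  obtain ⟨x₀, hx₀, x₁, hx₁, hne⟩ := htwo
  have hx₀p : x₀ ≠ p := ne_of_mem_of_not_mem hx₀.2 hpA
  obtain ⟨a, b, hab, hA_eq⟩ := A.exists_eq_affineSpan_insert_inter_hyperplane hx₀.2 hpA
  obtain ⟨c, ρ, hquadric⟩ : ∃ c ρ, ∀ y, ⟪a, stereoInv p y⟫ = b ↔ ‖y - c‖ ^ 2 = ρ :=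
    ⟨_, _, fun y => (inner_stereoInv_eq_iff a p y hab).trans (by rw [sub_neg_eq_add])⟩
  set P := affineSpan ℝ (insert p (A : Set _))
  have hpP : p ∈ P := mem_affineSpan ℝ (Set.mem_insert p _)
  have himage : stereoProj p '' (Metric.sphere 0 1 ∩ A) =
      ((P ⊓ (ℝ ∙ p)ᗮ.toAffineSubspace : AffineSubspace ℝ _) : Set _) ∩ {y | ‖y - c‖ ^ 2 = ρ} := by
    rw [image_stereoProj_sphere_inter hp hpA, hA_eq]
    ext y
    simp only [Set.mem_ofPred_eq, Set.mem_inter_iff, SetLike.mem_coe, AffineSubspace.mem_inf_iff,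
      Submodule.mem_toAffineSubspace, stereoInv_mem_iff hpP, hquadric]
    tauto
  have hmem : ∀ x ∈ Metric.sphere 0 1 ∩ (A : Set _), stereoProj p x ∈ _ := fun x hx =>
    himage ▸ Set.mem_image_of_mem (stereoProj p) hx
  obtain ⟨r, hr, hsphere⟩ := exists_pos_setOf_norm_sub_sq_eq_eq_sphere (hmem x₀ hx₀).2
    (hmem x₁ hx₁).2 ((stereoProj_injOn hp).ne ⟨hx₀.1, hx₀p⟩
      ⟨hx₁.1, ne_of_mem_of_not_mem hx₁.2 hpA⟩ hne)
  refine ⟨c, r, _, hr, ?_, himage.trans (by rw [hsphere])⟩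
  have hpx₀ : ⟪p, p - x₀⟫ ≠ 0 := by
    rw [inner_sub_right, real_inner_self_eq_norm_sq, hp, one_pow, real_inner_comm]
    exact one_sub_inner_ne_zero_of_ne hp (mem_sphere_zero_iff_norm.1 hx₀.1) hx₀p
  rw [AffineSubspace.finrank_direction_affineSpan_insert_inf_orthogonal hx₀.2 hpA hpx₀
    (hmem x₀ hx₀).1, hA]
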